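/- Let L > 0 and define f(t) = L − ∫_{−2}^{2} max( L·√(4−u²)/(2π) − t/(2π), 0 ) du for t ≥ 0. Then as t → 0⁺, f(t) = 2t/π − t³/(12πL²) − t⁵/(320πL⁴) + O(t⁶); in particular the refined connected two-point form factor has initial slope 2/π. -/

import Mathlib

/-!
Substituting `u = 2x` and writing `s = t / (2L)`, the integral becomes
`(2L/π) ∫_{-1}^{1} max (√(1 - x²) - s) 0 dx`, whose integrand is supported on
`|x| ≤ √(1 - s²)`. Computing it with the primitive of `√(1 - x²)` gives the closed form
`f(t) = (2L/π) (arcsin s + s √(1 - s²))` for `t ≤ 2L`. The derivative of the bracket is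
`2√(1 - s²) = 2 - s² - s⁴/4 + O(s⁶)`, and the mean value theorem integrates this to
`arcsin s + s √(1 - s²) = 2s - s³/3 - s⁵/20 + O(s⁷)`.
-/

open MeasureTheory Real Asymptotics

noncomputable def semicircleStripArea (s : ℝ) : ℝ := arcsin s + s * √(1 - s ^ 2)

theorem semicircleStripArea_neg (s : ℝ) :
    semicircleStripArea (-s) = -semicircleStripArea s := by
  simp only [semicircleStripArea, arcsin_neg, neg_sq]
  ring

theorem hasDerivAt_semicircleStripArea {x : ℝ} (h₁ : -1 < x) (h₂ : x < 1) :
    HasDerivAt semicircleStripArea (2 * √(1 - x ^ 2)) x := by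
  have hpos : 0 < 1 - x ^ 2 := by nlinarith
  have hsqrt : HasDerivAt (fun x : ℝ => √(1 - x ^ 2)) (-x / √(1 - x ^ 2)) x := by
    convert ((hasDerivAt_pow 2 x).const_sub 1).sqrt hpos.ne' using 1
    ring
  refine ((hasDerivAt_arcsin h₁.ne' h₂.ne).add ((hasDerivAt_id x).mul hsqrt)).congr_deriv ?_
  field_simp
  rw [id, sq_sqrt hpos.le]
  ring

theorem integral_sqrt_one_sub_sq_symm {b : ℝ} (hb₀ : 0 ≤ b) (hb₁ : b ≤ 1) :
    ∫ x in -b..b, √(1 - x ^ 2) = semicircleStripArea b := by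
  have hcont : Continuous semicircleStripArea := by
    unfold semicircleStripArea; fun_prop
  have hint := intervalIntegral.integral_eq_sub_of_hasDerivAt_of_le (a := -b) (b := b)
    (by linarith) hcont.continuousOn
    (fun x hx => hasDerivAt_semicircleStripArea (by linarith [hx.1]) (by linarith [hx.2]))
    (by apply Continuous.intervalIntegrable; fun_prop)
  rw [intervalIntegral.integral_const_mul, semicircleStripArea_neg] at hint
  linarith

theorem integral_max_sqrt_one_sub_sq_sub {s : ℝ} (hs₀ : 0 ≤ s) (hs₁ : s ≤ 1) :
    ∫ x in (-1:ℝ)..1, max (√(1 - x ^ 2) - s) 0 = π / 2 - semicircleStripArea s := by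
  set b := √(1 - s ^ 2) with hb
  have hb₀ : 0 ≤ b := sqrt_nonneg _
  have hb₁ : b ≤ 1 := sqrt_le_one.mpr (by nlinarith)
  have hbsq : b ^ 2 = 1 - s ^ 2 := sq_sqrt (by nlinarith)
  have hout : ∀ x, b ^ 2 ≤ x ^ 2 → max (√(1 - x ^ 2) - s) 0 = 0 := fun x hx =>
    max_eq_right (sub_nonpos.mpr ((sqrt_le_left hs₀).mpr (by linarith)))
  have hin : ∀ x, x ^ 2 ≤ b ^ 2 → max (√(1 - x ^ 2) - s) 0 = √(1 - x ^ 2) - s := fun x hx =>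
    max_eq_left (sub_nonneg.mpr ((le_sqrt hs₀ (by nlinarith)).mpr (by linarith)))
  have harcsin : arcsin b = π / 2 - arcsin s := by
    rw [← arccos_eq_arcsin hs₀, arccos_eq_pi_div_two_sub_arcsin]
  have hint : ∀ a c, IntervalIntegrable (fun x => max (√(1 - x ^ 2) - s) 0) volume a c := by
    intro a c; apply Continuous.intervalIntegrable; fun_prop
  rw [← intervalIntegral.integral_add_adjacent_intervals (hint _ (-b)) (hint _ _),
    ← intervalIntegral.integral_add_adjacent_intervals (hint (-b) b) (hint _ _),
    intervalIntegral.integral_congr (g := fun _ => 0) fun x hx => hout x ?_,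
    intervalIntegral.integral_congr (g := fun x => √(1 - x ^ 2) - s) fun x hx => hin x ?_,
    intervalIntegral.integral_congr (a := b) (g := fun _ => 0) fun x hx => hout x ?_]
  · rw [intervalIntegral.integral_sub (by apply Continuous.intervalIntegrable; fun_prop)
      intervalIntegrable_const, integral_sqrt_one_sub_sq_symm hb₀ hb₁]
    simp only [semicircleStripArea, harcsin, ← hb, hbsq, sub_sub_cancel, sqrt_sq hs₀,
      intervalIntegral.integral_zero, intervalIntegral.integral_const, smul_eq_mul]
    ring
  all_goals
    rw [Set.uIcc_of_le (by linarith)] at hx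
    nlinarith [hx.1, hx.2]

noncomputable def refinedFormFactor (L t : ℝ) : ℝ :=
  L - ∫ u in (-2:ℝ)..2, max (L * √(4 - u ^ 2) / (2 * π) - t / (2 * π)) 0

theorem refinedFormFactor_eq {L t : ℝ} (hL : 0 < L) (ht₀ : 0 ≤ t) (ht : t ≤ 2 * L) :
    refinedFormFactor L t = 2 * L / π * semicircleStripArea (t / (2 * L)) := by
  have hs₀ : 0 ≤ t / (2 * L) := by positivity
  have hs₁ : t / (2 * L) ≤ 1 := (div_le_one (by positivity)).mpr ht
  have hrescale : ∀ x : ℝ,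
      max (L * √(4 - (2 * x) ^ 2) / (2 * π) - t / (2 * π)) 0
        = L / π * max (√(1 - x ^ 2) - t / (2 * L)) 0 := by
    intro x
    have hsqrt : √(4 - (2 * x) ^ 2) = 2 * √(1 - x ^ 2) := by
      rw [show 4 - (2 * x) ^ 2 = 2 ^ 2 * (1 - x ^ 2) by ring, sqrt_mul (by norm_num),
        sqrt_sq zero_le_two]
    rw [hsqrt, mul_max_of_nonneg _ _ (by positivity : 0 ≤ L / π), mul_zero]
    congr 1
    field_simp
  have hsubst := intervalIntegral.integral_comp_mul_left
    (fun u => max (L * √(4 - u ^ 2) / (2 * π) - t / (2 * π)) 0) (two_ne_zero' ℝ)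
    (a := -1) (b := 1)
  simp only [hrescale, intervalIntegral.integral_const_mul,
    integral_max_sqrt_one_sub_sq_sub hs₀ hs₁, smul_eq_mul] at hsubst
  norm_num at hsubst
  have hπ : L / π * π = L := div_mul_cancel₀ L pi_ne_zero
  rw [refinedFormFactor]
  linear_combination 2 * hsubst - hπ

theorem abs_two_mul_sqrt_one_sub_sq_sub_le {x : ℝ} (hx : x ^ 2 ≤ 1 / 4) :
    |2 * √(1 - x ^ 2) - (2 - x ^ 2 - x ^ 4 / 4)| ≤ x ^ 6 := by
  have hx4 : x ^ 4 ≤ 1 / 16 := by nlinarith [sq_nonneg x]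
  have hq₀ : 3 / 4 ≤ 1 - x ^ 2 / 2 - x ^ 4 / 8 := by linarith
  set r := √(1 - x ^ 2)
  set q := 1 - x ^ 2 / 2 - x ^ 4 / 8
  have hr : r ^ 2 = 1 - x ^ 2 := sq_sqrt (by linarith)
  have hr₀ : 3 / 4 ≤ r := by nlinarith [sqrt_nonneg (1 - x ^ 2)]
  -- `q` is the degree-4 Taylor polynomial of `r`, and `r² - q²` is of order `x⁶`
  have hdiff : (r - q) * (r + q) = -(x ^ 6 / 8 + x ^ 8 / 64) := by
    rw [show (r - q) * (r + q) = r ^ 2 - q ^ 2 by ring, hr]; ring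
  have hx6 : 0 ≤ x ^ 6 := by positivity
  have hx8 : x ^ 8 ≤ x ^ 6 / 4 := by nlinarith
  rw [show 2 * r - (2 - x ^ 2 - x ^ 4 / 4) = 2 * (r - q) by ring, abs_le]
  constructor <;> nlinarith

theorem abs_semicircleStripArea_sub_taylor_le {s : ℝ} (hs₀ : 0 ≤ s) (hs : s ≤ 1 / 2) :
    |semicircleStripArea s - (2 * s - s ^ 3 / 3 - s ^ 5 / 20)| ≤ s ^ 7 := by
  set R : ℝ → ℝ := fun x => semicircleStripArea x - (2 * x - x ^ 3 / 3 - x ^ 5 / 20)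
  have hderiv : ∀ x ∈ Set.Icc 0 s,
      HasDerivAt R (2 * √(1 - x ^ 2) - (2 - x ^ 2 - x ^ 4 / 4)) x := by
    intro x hx
    have hpoly : HasDerivAt (fun x : ℝ => 2 * x - x ^ 3 / 3 - x ^ 5 / 20)
        (2 - x ^ 2 - x ^ 4 / 4) x := by
      refine ((((hasDerivAt_id x).const_mul 2).sub ((hasDerivAt_pow 3 x).div_const 3)).sub
        ((hasDerivAt_pow 5 x).div_const 20)).congr_deriv ?_
      norm_num
      ring
    exact (hasDerivAt_semicircleStripArea (by linarith [hx.1]) (by linarith [hx.2])).sub hpoly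
  have hbound : ∀ x ∈ Set.Ico 0 s, ‖2 * √(1 - x ^ 2) - (2 - x ^ 2 - x ^ 4 / 4)‖ ≤ s ^ 6 := by
    intro x hx
    calc _ ≤ x ^ 6 := abs_two_mul_sqrt_one_sub_sq_sub_le (by nlinarith [hx.1, hx.2])
      _ ≤ s ^ 6 := by gcongr; exacts [hx.1, hx.2.le]
  have hmvt := norm_image_sub_le_of_norm_deriv_le_segment'
    (fun x hx => (hderiv x hx).hasDerivWithinAt) hbound s ⟨hs₀, le_rfl⟩
  have hR₀ : R 0 = 0 := by simp [R, semicircleStripArea]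
  rw [hR₀, sub_zero, sub_zero, Real.norm_eq_abs] at hmvt
  linarith

theorem gue_refined_form_factor_small_time (L : ℝ) (hL : 0 < L) :
    (fun t : ℝ =>
        (L - ∫ u in (-2:ℝ)..2,
            max (L * Real.sqrt (4 - u^2) / (2 * Real.pi) - t / (2 * Real.pi)) 0)
          - (2 * t / Real.pi - t^3 / (12 * Real.pi * L^2) - t^5 / (320 * Real.pi * L^4)))
      =O[nhdsWithin 0 (Set.Ioi 0)] (fun t : ℝ => t^6) := by
  refine IsBigO.of_bound (2 * L / π / (2 * L) ^ 6) ?_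
  filter_upwards [Ioo_mem_nhdsGT hL] with t ⟨ht₀, htL⟩
  set s := t / (2 * L) with hs
  have hs₀ : 0 ≤ s := by positivity
  have hs₁ : s ≤ 1 / 2 := by rw [hs, div_le_iff₀ (by positivity)]; linarith
  have hexpand : 2 * t / π - t ^ 3 / (12 * π * L ^ 2) - t ^ 5 / (320 * π * L ^ 4)
      = 2 * L / π * (2 * s - s ^ 3 / 3 - s ^ 5 / 20) := by
    rw [hs]; field_simp; ring
  rw [← refinedFormFactor, refinedFormFactor_eq hL ht₀.le (by linarith), ← hs, hexpand, ← mul_sub,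
    norm_mul, norm_of_nonneg (by positivity : 0 ≤ 2 * L / π),
    norm_of_nonneg (by positivity : 0 ≤ t ^ 6), norm_eq_abs]
  calc 2 * L / π * |semicircleStripArea s - (2 * s - s ^ 3 / 3 - s ^ 5 / 20)|
      ≤ 2 * L / π * s ^ 6 := by
        gcongr
        exact (abs_semicircleStripArea_sub_taylor_le hs₀ hs₁).trans
          (pow_le_pow_of_le_one hs₀ (by linarith) (by norm_num))
    _ = 2 * L / π / (2 * L) ^ 6 * t ^ 6 := by rw [hs, div_pow]; ring
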